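/- arXiv:1302.7302 — 4 statements merged into one kernel-verified Lean document; each statement's English description precedes it below -/
import Mathlib

section
/- With notation as in the construction of the universal infinitesimal deformation: if μ and μ' are two choices of representative cocycles for classes in H = H²(L,L) differing by coboundaries, i.e., μ(h) − μ'(h) = δ¹(f(h)) for a linear map f: H → C¹(L,L), then the map ρ: L ⊕ Hom(H,L) → L ⊕ Hom(H,L), ρ(l,φ) = (l, ψ) with ψ(h) = f(h)(l) + φ(h), is a bijective weak morphism between the two resulting Hom-Leibniz algebra structures: ρ[(l₁,φ₁),(l₂,φ₂)]_μ = [ρ(l₁,φ₁), ρ(l₂,φ₂)]_{μ'}. -/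
section Independence

variable {K L H : Type*} [Field K] [AddCommGroup L] [Module K L]
  [AddCommGroup H] [Module K H]

/-- The bracket on `L ⊕ Hom(H, L)` associated with a choice `μ` of representative
cocycles. -/
noncomputable def infBracket (b : L →ₗ[K] L →ₗ[K] L)
    (μ : H →ₗ[K] (L →ₗ[K] L →ₗ[K] L))
    (p q : L × (H →ₗ[K] L)) : L × (H →ₗ[K] L) :=
  (b p.1 q.1,
    (μ.flip p.1).flip q.1 + (b.flip q.1).comp p.2 + (b p.1).comp q.2)

/-- The comparison map `ρ(l, φ) = (l, ψ)` with `ψ(h) = f(h)(l) + φ(h)`. -/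
def rhoMap (f : H →ₗ[K] (L →ₗ[K] L)) (p : L × (H →ₗ[K] L)) :
    L × (H →ₗ[K] L) :=
  (p.1, f.flip p.1 + p.2)

@[simp]
theorem infBracket_fst (b : L →ₗ[K] L →ₗ[K] L) (μ : H →ₗ[K] (L →ₗ[K] L →ₗ[K] L))
    (p q : L × (H →ₗ[K] L)) : (infBracket b μ p q).1 = b p.1 q.1 :=
  rfl

@[simp]
theorem infBracket_snd_apply (b : L →ₗ[K] L →ₗ[K] L) (μ : H →ₗ[K] (L →ₗ[K] L →ₗ[K] L))
    (p q : L × (H →ₗ[K] L)) (h : H) :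
    (infBracket b μ p q).2 h = μ h p.1 q.1 + b (p.2 h) q.1 + b p.1 (q.2 h) :=
  rfl

@[simp]
theorem rhoMap_fst (f : H →ₗ[K] (L →ₗ[K] L)) (p : L × (H →ₗ[K] L)) :
    (rhoMap f p).1 = p.1 :=
  rfl

@[simp]
theorem rhoMap_snd_apply (f : H →ₗ[K] (L →ₗ[K] L)) (p : L × (H →ₗ[K] L)) (h : H) :
    (rhoMap f p).2 h = f h p.1 + p.2 h :=
  rfl

theorem rhoMap_rhoMap (f g : H →ₗ[K] (L →ₗ[K] L)) (p : L × (H →ₗ[K] L)) :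
    rhoMap f (rhoMap g p) = rhoMap (f + g) p := by
  ext h <;> simp [add_assoc]

theorem rhoMap_zero (p : L × (H →ₗ[K] L)) : rhoMap (0 : H →ₗ[K] (L →ₗ[K] L)) p = p := by
  ext h <;> simp

theorem rhoMap_bijective (f : H →ₗ[K] (L →ₗ[K] L)) : Function.Bijective (rhoMap f) :=
  Function.bijective_iff_has_inverse.mpr
    ⟨rhoMap (-f), fun p => by rw [rhoMap_rhoMap, neg_add_cancel, rhoMap_zero],
      fun p => by rw [rhoMap_rhoMap, add_neg_cancel, rhoMap_zero]⟩

theorem rhoMap_infBracket (b : L →ₗ[K] L →ₗ[K] L) (μ μ' : H →ₗ[K] (L →ₗ[K] L →ₗ[K] L))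
    (f : H →ₗ[K] (L →ₗ[K] L))
    (hdiff : ∀ (h : H) (x y : L),
      μ h x y - μ' h x y = b x (f h y) + b (f h x) y - f h (b x y))
    (p q : L × (H →ₗ[K] L)) :
    rhoMap f (infBracket b μ p q) = infBracket b μ' (rhoMap f p) (rhoMap f q) := by
  ext h
  · rfl
  · simp only [rhoMap_snd_apply, infBracket_fst, infBracket_snd_apply, rhoMap_fst, map_add,
      LinearMap.add_apply]
    -- the two sides differ by `μ h - μ' h - δ¹(f h)` evaluated at `(p.1, q.1)`
    linear_combination (norm := abel) hdiff h p.1 q.1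

theorem rhoMap_weak_isomorphism_general (b : L →ₗ[K] L →ₗ[K] L)
    (μ μ' : H →ₗ[K] (L →ₗ[K] L →ₗ[K] L)) (f : H →ₗ[K] (L →ₗ[K] L))
    (hdiff : ∀ (h : H) (x y : L),
      μ h x y - μ' h x y = b x (f h y) + b (f h x) y - f h (b x y)) :
    Function.Bijective (rhoMap f) ∧
      ∀ p q : L × (H →ₗ[K] L),
        rhoMap f (infBracket b μ p q) = infBracket b μ' (rhoMap f p) (rhoMap f q) :=
  ⟨rhoMap_bijective f, rhoMap_infBracket b μ μ' f hdiff⟩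

/-- If two choices `μ, μ'` of representative cocycles differ by the coboundaries
`δ¹(f h)`, then `ρ(l,φ) = (l, h ↦ f(h)(l) + φ(h))` is a bijective weak morphism
between the two Hom-Leibniz structures on `L ⊕ Hom(H, L)`. -/
theorem rhoMap_weak_isomorphism (b : L →ₗ[K] L →ₗ[K] L)
    [FiniteDimensional K H]
    (μ μ' : H →ₗ[K] (L →ₗ[K] L →ₗ[K] L)) (f : H →ₗ[K] (L →ₗ[K] L))
    (hdiff : ∀ (h : H) (x y : L),
      μ h x y - μ' h x y = b x (f h y) + b (f h x) y - f h (b x y)) :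
    Function.Bijective (rhoMap f) ∧
      ∀ p q : L × (H →ₗ[K] L),
        rhoMap f (infBracket b μ p q) = infBracket b μ' (rhoMap f p) (rhoMap f q) :=
  rhoMap_weak_isomorphism_general b μ μ' f hdiff

end Independence
end

section
/- Let λ be an infinitesimal deformation of a Hom-Leibniz algebra (L,[·,·],α) with finite-dimensional base (A, m) where m² = 0, and let ξ: A → K be linear with ξ(1) = 0 (i.e., ξ ∈ m'). Define ψ_{λ,ξ}(l₁,l₂) = (ξ ⊗ id)([1⊗l₁, 1⊗l₂]_λ). Then ψ_{λ,ξ} is a 2-cocycle of L with adjoint coefficients: δ² ψ_{λ,ξ} = 0. -/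
open scoped TensorProduct

/-!
Write `f = (ξ ⊗ id)` and `e = (ε ⊗ id)`, viewed as maps `A ⊗ L → L`. Since `m² = 0` and `ξ(1) = 0`,
`ξ` is an `ε`-derivation (apply `ξ` to `(a - ε a)(c - ε c) = 0`). Hence for every `A`-linear `T` lifting a
`K`-linear `S` along `e`, `f (T w) = f (T (1 ⊗ e w)) + S (f w)`. Applying `f` to the Hom-Leibniz
identity of `λ` at `1 ⊗ l₁, 1 ⊗ l₂, 1 ⊗ l₃` and expanding each bracket this way, with `T` a left or
right multiplication by some `1 ⊗ l`, gives exactly `δ²ψ_{λ,ξ}(l₁, l₂, l₃) = 0`.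
-/

section Contraction

variable {K A L : Type*} [CommRing K] [CommRing A] [Algebra K A] [AddCommGroup L] [Module K L]

variable (L) in
def contractWith (φ : A →ₗ[K] K) : A ⊗[K] L →ₗ[K] L :=
  (TensorProduct.lid K L).toLinearMap ∘ₗ TensorProduct.map φ LinearMap.id

@[simp]
theorem contractWith_tmul (φ : A →ₗ[K] K) (a : A) (y : L) :
    contractWith L φ (a ⊗ₜ y) = φ a • y := by
  simp [contractWith]

theorem contractWith_one_tmul (ε : A →ₐ[K] K) (y : L) :
    contractWith L ε.toLinearMap (1 ⊗ₜ y) = y := by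
  simp

theorem apply_mul_of_ker_mul_ker_eq_zero (ε : A →ₐ[K] K)
    (hm2 : ∀ x y : A, ε x = 0 → ε y = 0 → x * y = 0) (ξ : A →ₗ[K] K) (hξ : ξ 1 = 0) (a c : A) :
    ξ (a * c) = ε a * ξ c + ξ a * ε c := by
  have hker : (a - algebraMap K A (ε a)) * (c - algebraMap K A (ε c)) = 0 :=
    hm2 _ _ (by simp) (by simp)
  have hexp : a * c = ε c • a + ε a • c - (ε a * ε c) • 1 := by
    simp only [Algebra.smul_def, map_mul, mul_one]
    linear_combination hker
  rw [hexp]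
  simp only [map_sub, map_add, map_smul, hξ, smul_eq_mul]
  ring

theorem contractWith_smul {ε ξ : A →ₗ[K] K}
    (hder : ∀ a c : A, ξ (a * c) = ε a * ξ c + ξ a * ε c) (a : A) (t : A ⊗[K] L) :
    contractWith L ξ (a • t) = ε a • contractWith L ξ t + ξ a • contractWith L ε t := by
  induction t using TensorProduct.induction_on with
  | zero => simp
  | tmul c y =>
    rw [TensorProduct.smul_tmul', smul_eq_mul]
    simp only [contractWith_tmul, hder, add_smul, smul_smul]
  | add u v hu hv =>
    rw [smul_add, map_add, hu, hv, map_add, map_add, smul_add, smul_add]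
    abel

theorem contractWith_apply_of_lift {ε ξ : A →ₗ[K] K} (hε : ε 1 = 1)
    (hder : ∀ a c : A, ξ (a * c) = ε a * ξ c + ξ a * ε c)
    (T : A ⊗[K] L →ₗ[A] A ⊗[K] L) (S : L →ₗ[K] L)
    (hT : ∀ t, contractWith L ε (T t) = S (contractWith L ε t)) (w : A ⊗[K] L) :
    contractWith L ξ (T w) = contractWith L ξ (T (1 ⊗ₜ contractWith L ε w))
      + S (contractWith L ξ w) := by
  induction w using TensorProduct.induction_on with
  | zero => simp
  | tmul a y =>
    have hsplit : a ⊗ₜ[K] y = a • ((1 : A) ⊗ₜ[K] y) := by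
      rw [TensorProduct.smul_tmul', smul_eq_mul, mul_one]
    have hcomm : contractWith L ε (T (1 ⊗ₜ y)) = S y := by
      rw [hT, contractWith_tmul, hε, one_smul]
    rw [hsplit, map_smul, contractWith_smul hder, hcomm, ← hsplit, contractWith_tmul,
      TensorProduct.tmul_smul, LinearMap.map_smul_of_tower, map_smul, contractWith_tmul, map_smul]
  | add u v hu hv =>
    simp only [map_add, TensorProduct.tmul_add, hu, hv]
    abel

end Contraction

theorem psi_lambda_xi_is_cocycle_general {K A L : Type*} [Field K] [CommRing A] [Algebra K A]
    [AddCommGroup L] [Module K L]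
    (ε : A →ₐ[K] K)
    (hm2 : ∀ x y : A, ε x = 0 → ε y = 0 → x * y = 0)
    (b : L →ₗ[K] L →ₗ[K] L) (α : L →ₗ[K] L)
    (bl : (A ⊗[K] L) →ₗ[A] (A ⊗[K] L) →ₗ[A] (A ⊗[K] L))
    (hlleib : ∀ u v w : A ⊗[K] L,
      bl (LinearMap.lTensor A α u) (bl v w)
        = bl (bl u v) (LinearMap.lTensor A α w) - bl (bl u w) (LinearMap.lTensor A α v))
    (hhom : ∀ u v : A ⊗[K] L,
      (TensorProduct.lid K L) ((TensorProduct.map ε.toLinearMap LinearMap.id) (bl u v))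
        = b ((TensorProduct.lid K L) ((TensorProduct.map ε.toLinearMap LinearMap.id) u))
            ((TensorProduct.lid K L) ((TensorProduct.map ε.toLinearMap LinearMap.id) v)))
    (ξ : A →ₗ[K] K) (hξ : ξ 1 = 0)
    (ψ : L → L → L)
    (hψ : ∀ l₁ l₂ : L, ψ l₁ l₂ =
      (TensorProduct.lid K L)
        ((TensorProduct.map ξ LinearMap.id) (bl ((1 : A) ⊗ₜ[K] l₁) ((1 : A) ⊗ₜ[K] l₂)))) :
    ∀ l₁ l₂ l₃ : L,
      b (α l₁) (ψ l₂ l₃) + b (ψ l₁ l₃) (α l₂) - b (ψ l₁ l₂) (α l₃)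
        - ψ (b l₁ l₂) (α l₃) + ψ (b l₁ l₃) (α l₂) + ψ (α l₁) (b l₂ l₃) = 0 := by
  intro l₁ l₂ l₃
  set f := contractWith L ξ
  set e := contractWith L ε.toLinearMap
  have he : ∀ u v, e (bl u v) = b (e u) (e v) := hhom
  have hψf : ∀ x y, ψ x y = f (bl (1 ⊗ₜ x) (1 ⊗ₜ y)) := hψ
  have hε : ε.toLinearMap 1 = 1 := map_one ε
  have hder := apply_mul_of_ker_mul_ker_eq_zero ε hm2 ξ hξ
  have expand_left (x : L) (w : A ⊗[K] L) : f (bl (1 ⊗ₜ x) w) = ψ x (e w) + b x (f w) := by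
    rw [hψf]
    exact contractWith_apply_of_lift hε hder (bl (1 ⊗ₜ x)) (b x)
      (fun t => by rw [he, contractWith_one_tmul]) w
  have expand_right (x : L) (w : A ⊗[K] L) : f (bl w (1 ⊗ₜ x)) = ψ (e w) x + b (f w) x := by
    rw [hψf]
    exact contractWith_apply_of_lift hε hder (bl.flip (1 ⊗ₜ x)) (b.flip x)
      (fun t => by rw [LinearMap.flip_apply, he, contractWith_one_tmul]; rfl) w
  have H := congrArg f (hlleib (1 ⊗ₜ l₁) (1 ⊗ₜ l₂) (1 ⊗ₜ l₃))
  simp only [LinearMap.lTensor_tmul, map_sub] at H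
  rw [expand_left (α l₁), expand_right (α l₃) (bl _ _), expand_right (α l₂) (bl _ _),
    he, he, he] at H
  simp only [e, contractWith_one_tmul, ← hψf] at H
  linear_combination (norm := abel) H

/-- For an infinitesimal deformation `λ` of a Hom-Leibniz algebra `(L,[·,·],α)` with
finite-dimensional base `(A, m)`, `m² = 0`, and any `ξ ∈ m'` (a linear functional on `A`
with `ξ(1) = 0`), the 2-cochain `ψ_{λ,ξ}(l₁,l₂) = (ξ ⊗ id)([1⊗l₁, 1⊗l₂]_λ)` is a
2-cocycle: `δ²ψ_{λ,ξ} = 0`. -/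
theorem psi_lambda_xi_is_cocycle {K A L : Type*} [Field K] [CommRing A] [Algebra K A]
    [FiniteDimensional K A] [AddCommGroup L] [Module K L]
    (ε : A →ₐ[K] K)
    (hm2 : ∀ x y : A, ε x = 0 → ε y = 0 → x * y = 0)
    (b : L →ₗ[K] L →ₗ[K] L) (α : L →ₗ[K] L)
    (hleib : ∀ x y z : L, b (α x) (b y z) = b (b x y) (α z) - b (b x z) (α y))
    (bl : (A ⊗[K] L) →ₗ[A] (A ⊗[K] L) →ₗ[A] (A ⊗[K] L))
    (hlleib : ∀ u v w : A ⊗[K] L,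
      bl (LinearMap.lTensor A α u) (bl v w)
        = bl (bl u v) (LinearMap.lTensor A α w) - bl (bl u w) (LinearMap.lTensor A α v))
    (hhom : ∀ u v : A ⊗[K] L,
      (TensorProduct.lid K L) ((TensorProduct.map ε.toLinearMap LinearMap.id) (bl u v))
        = b ((TensorProduct.lid K L) ((TensorProduct.map ε.toLinearMap LinearMap.id) u))
            ((TensorProduct.lid K L) ((TensorProduct.map ε.toLinearMap LinearMap.id) v)))
    (ξ : A →ₗ[K] K) (hξ : ξ 1 = 0)
    (ψ : L → L → L)
    (hψ : ∀ l₁ l₂ : L, ψ l₁ l₂ =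
      (TensorProduct.lid K L)
        ((TensorProduct.map ξ LinearMap.id) (bl ((1 : A) ⊗ₜ[K] l₁) ((1 : A) ⊗ₜ[K] l₂)))) :
    ∀ l₁ l₂ l₃ : L,
      b (α l₁) (ψ l₂ l₃) + b (ψ l₁ l₃) (α l₂) - b (ψ l₁ l₂) (α l₃)
        - ψ (b l₁ l₂) (α l₃) + ψ (b l₁ l₃) (α l₂) + ψ (α l₁) (b l₂ l₃) = 0 :=
  psi_lambda_xi_is_cocycle_general ε hm2 b α bl hlleib hhom ξ hξ ψ hψ
end

section
/- Given a deformation λ of a Hom-Leibniz algebra L with base (A,m), another augmented commutative algebra (A',m'), and an augmentation-preserving unital algebra homomorphism φ: A → A', the push-out bracket [a₁'⊗_A(a₁⊗l₁), a₂'⊗_A(a₂⊗l₂)]_{φ*λ} = a₁'a₂' ⊗_A [a₁⊗l₁, a₂⊗l₂]_λ makes (A'⊗L, [·,·]_{φ*λ}, id⊗α) a Hom-Leibniz A'-algebra, i.e., the push-out of a deformation is a deformation. -/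
/-!
The map `φ ⊗ id : A ⊗ L → A' ⊗ L` carries `bl` to the push-out bracket `bl'` and `id ⊗ α` to
`id ⊗ α`, hence carries the Hom-Leibniz defect `homLeibnizator` of `bl` (an `A`-trilinear map) to
that of `bl'`. As an `A'`-module, `A' ⊗ L` is generated by the elements `1 ⊗ l`, all of which lie
in the image of `φ ⊗ id`; so the `A'`-trilinear defect of `bl'` vanishes because that of `bl` does.
Likewise `ε' ⊗ id` is a homomorphism on these generators because `ε' ∘ φ = ε` and `ε ⊗ id` is one.
-/

open TensorProduct

theorem TensorProduct.map_algHom_smul {R A B M : Type*} [CommSemiring R] [Semiring A]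
    [Algebra R A] [Semiring B] [Algebra R B] [AddCommMonoid M] [Module R M]
    (φ : A →ₐ[R] B) (a : A) (x : A ⊗[R] M) :
    map φ.toLinearMap LinearMap.id (a • x) = φ a • map φ.toLinearMap LinearMap.id x := by
  induction x using TensorProduct.induction_on with
  | zero => simp
  | tmul c m => simp [smul_tmul']
  | add x y hx hy => simp [hx, hy]

theorem TensorProduct.AlgebraTensorModule.ext_one_tmul₃ {R A M : Type*} [CommSemiring R]
    [CommSemiring A] [Algebra R A] [AddCommMonoid M] [Module R M]
    {f g : A ⊗[R] M →ₗ[A] A ⊗[R] M →ₗ[A] A ⊗[R] M →ₗ[A] A ⊗[R] M}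
    (h : ∀ m₁ m₂ m₃ : M,
      f (1 ⊗ₜ m₁) (1 ⊗ₜ m₂) (1 ⊗ₜ m₃) = g (1 ⊗ₜ m₁) (1 ⊗ₜ m₂) (1 ⊗ₜ m₃)) :
    f = g := by
  apply curry_injective
  ext m₁ : 2
  apply curry_injective
  ext m₂ : 2
  apply curry_injective
  ext m₃ : 2
  exact h m₁ m₂ m₃

section HomLeibniz

variable {R M : Type*} [CommRing R] [AddCommGroup M] [Module R M]

def homLeibnizator (B : M →ₗ[R] M →ₗ[R] M) (T : M →ₗ[R] M) :
    M →ₗ[R] M →ₗ[R] M →ₗ[R] M :=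
  LinearMap.mk₂ R (fun u v => B (T u) ∘ₗ B v - (B (B u v) ∘ₗ T - B.flip (T v) ∘ₗ B u))
    (fun _ _ _ => by ext; simp; abel)
    (fun _ _ _ => by ext; simp [smul_sub])
    (fun _ _ _ => by ext; simp; abel)
    (fun _ _ _ => by ext; simp [smul_sub])

@[simp]
theorem homLeibnizator_apply (B : M →ₗ[R] M →ₗ[R] M) (T : M →ₗ[R] M) (u v w : M) :
    homLeibnizator B T u v w = B (T u) (B v w) - (B (B u v) (T w) - B (B u w) (T v)) :=
  rfl

theorem homLeibnizator_eq_zero_iff (B : M →ₗ[R] M →ₗ[R] M) (T : M →ₗ[R] M) :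
    homLeibnizator B T = 0 ↔
      ∀ u v w, B (T u) (B v w) = B (B u v) (T w) - B (B u w) (T v) := by
  simp only [LinearMap.ext_iff, homLeibnizator_apply, LinearMap.zero_apply, sub_eq_zero]

theorem homLeibnizator_map {R' N F : Type*} [CommRing R'] [AddCommGroup N] [Module R' N]
    [FunLike F M N] [AddMonoidHomClass F M N] (Φ : F)
    {B : M →ₗ[R] M →ₗ[R] M} {T : M →ₗ[R] M} {B' : N →ₗ[R'] N →ₗ[R'] N} {T' : N →ₗ[R'] N}
    (hB : ∀ x y, Φ (B x y) = B' (Φ x) (Φ y)) (hT : ∀ x, Φ (T x) = T' (Φ x)) (u v w : M) :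
    Φ (homLeibnizator B T u v w) = homLeibnizator B' T' (Φ u) (Φ v) (Φ w) := by
  simp only [homLeibnizator_apply, hB, hT, map_sub]

end HomLeibniz

section Pushout

variable {K A A' L : Type*} [CommRing K] [CommRing A] [Algebra K A] [CommRing A'] [Algebra K A']
  [AddCommGroup L] [Module K L] (φ : A →ₐ[K] A')
  (bl : A ⊗[K] L →ₗ[A] A ⊗[K] L →ₗ[A] A ⊗[K] L) (bl' : A' ⊗[K] L →ₗ[A'] A' ⊗[K] L →ₗ[A'] A' ⊗[K] L)

def IsPushoutBracket : Prop :=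
  ∀ (a₁' a₂' : A') (l₁ l₂ : L),
    bl' (a₁' ⊗ₜ[K] l₁) (a₂' ⊗ₜ[K] l₂)
      = (a₁' * a₂') • map φ.toLinearMap LinearMap.id (bl ((1 : A) ⊗ₜ[K] l₁) ((1 : A) ⊗ₜ[K] l₂))

variable {φ bl bl'}

theorem IsPushoutBracket.map_bracket (hpush : IsPushoutBracket φ bl bl') (Y Z : A ⊗[K] L) :
    map φ.toLinearMap LinearMap.id (bl Y Z)
      = bl' (map φ.toLinearMap LinearMap.id Y) (map φ.toLinearMap LinearMap.id Z) := by
  induction Y using TensorProduct.induction_on with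
  | zero => simp
  | add Y₁ Y₂ h₁ h₂ => simp only [map_add, LinearMap.add_apply, h₁, h₂]
  | tmul a l =>
    induction Z using TensorProduct.induction_on with
    | zero => simp
    | add Z₁ Z₂ h₁ h₂ => simp only [map_add, h₁, h₂]
    | tmul c m =>
      rw [map_tmul, map_tmul, hpush, tmul_eq_smul_one_tmul a, tmul_eq_smul_one_tmul c]
      simp only [map_smul, LinearMap.smul_apply, map_algHom_smul, mul_smul,
        AlgHom.toLinearMap_apply, LinearMap.id_apply]
      exact smul_comm _ _ _

theorem IsPushoutBracket.homLeibnizator_eq_zero (hpush : IsPushoutBracket φ bl bl')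
    {α : L →ₗ[K] L} (hlleib : homLeibnizator bl (α.baseChange A) = 0) :
    homLeibnizator bl' (α.baseChange A') = 0 := by
  refine AlgebraTensorModule.ext_one_tmul₃ fun l₁ l₂ l₃ => ?_
  have hone : ∀ l : L, (1 : A') ⊗ₜ[K] l = map φ.toLinearMap LinearMap.id ((1 : A) ⊗ₜ l) := by
    simp
  have hα : ∀ Y : A ⊗[K] L, map φ.toLinearMap LinearMap.id (α.baseChange A Y)
      = α.baseChange A' (map φ.toLinearMap LinearMap.id Y) := by
    intro Y
    induction Y using TensorProduct.induction_on <;> simp_all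
  rw [hone, hone, hone, ← homLeibnizator_map _ hpush.map_bracket hα, hlleib]
  simp

theorem IsPushoutBracket.lid_map_augmentation (hpush : IsPushoutBracket φ bl bl')
    {ε : A →ₐ[K] K} {ε' : A' →ₐ[K] K} (hφ : ∀ a : A, ε' (φ a) = ε a) {b : L →ₗ[K] L →ₗ[K] L}
    (hhom : ∀ u v : A ⊗[K] L,
      TensorProduct.lid K L (map ε.toLinearMap LinearMap.id (bl u v))
        = b (TensorProduct.lid K L (map ε.toLinearMap LinearMap.id u))
            (TensorProduct.lid K L (map ε.toLinearMap LinearMap.id v)))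
    (u v : A' ⊗[K] L) :
    TensorProduct.lid K L (map ε'.toLinearMap LinearMap.id (bl' u v))
      = b (TensorProduct.lid K L (map ε'.toLinearMap LinearMap.id u))
          (TensorProduct.lid K L (map ε'.toLinearMap LinearMap.id v)) := by
  have hε : ε'.toLinearMap ∘ₗ φ.toLinearMap = ε.toLinearMap := LinearMap.ext hφ
  induction u using TensorProduct.induction_on with
  | zero => simp
  | add u₁ u₂ h₁ h₂ => simp only [map_add, LinearMap.add_apply, h₁, h₂]
  | tmul a₁ l₁ =>
    induction v using TensorProduct.induction_on with
    | zero => simp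
    | add v₁ v₂ h₁ h₂ => simp only [map_add, h₁, h₂]
    | tmul a₂ l₂ =>
      rw [hpush, map_algHom_smul, map_smul, TensorProduct.map_map, hε, LinearMap.id_comp, hhom]
      simp only [map_tmul, map_mul, mul_smul, map_smul, LinearMap.smul_apply, lid_tmul,
        AlgHom.toLinearMap_apply, LinearMap.id_apply, map_one, one_smul]
      exact smul_comm _ _ _

end Pushout

/-- The push-out of a deformation of a Hom-Leibniz algebra along an
augmentation-preserving unital algebra homomorphism `φ : A → A'` is again a
deformation: the push-out bracket satisfies the Hom-Leibniz identity on `A' ⊗ L`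
(with structure map `id ⊗ α`) and `ε' ⊗ id` is a Hom-Leibniz homomorphism. -/
theorem pushout_is_deformation {K A A' L : Type*} [Field K]
    [CommRing A] [Algebra K A] [CommRing A'] [Algebra K A']
    [AddCommGroup L] [Module K L]
    (ε : A →ₐ[K] K) (ε' : A' →ₐ[K] K)
    (φ : A →ₐ[K] A') (hφ : ∀ a : A, ε' (φ a) = ε a)
    (b : L →ₗ[K] L →ₗ[K] L) (α : L →ₗ[K] L)
    -- the deformation λ with base A
    (bl : (A ⊗[K] L) →ₗ[A] (A ⊗[K] L) →ₗ[A] (A ⊗[K] L))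
    (hlleib : ∀ u v w : A ⊗[K] L,
      bl (LinearMap.lTensor A α u) (bl v w)
        = bl (bl u v) (LinearMap.lTensor A α w) - bl (bl u w) (LinearMap.lTensor A α v))
    (hhom : ∀ u v : A ⊗[K] L,
      (TensorProduct.lid K L) ((TensorProduct.map ε.toLinearMap LinearMap.id) (bl u v))
        = b ((TensorProduct.lid K L) ((TensorProduct.map ε.toLinearMap LinearMap.id) u))
            ((TensorProduct.lid K L) ((TensorProduct.map ε.toLinearMap LinearMap.id) v)))
    -- the push-out bracket φ⋆λ with base A'
    (bl' : (A' ⊗[K] L) →ₗ[A'] (A' ⊗[K] L) →ₗ[A'] (A' ⊗[K] L))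
    (hpush : ∀ (a₁' a₂' : A') (l₁ l₂ : L),
      bl' (a₁' ⊗ₜ[K] l₁) (a₂' ⊗ₜ[K] l₂)
        = (a₁' * a₂') •
            (TensorProduct.map φ.toLinearMap LinearMap.id
              (bl ((1 : A) ⊗ₜ[K] l₁) ((1 : A) ⊗ₜ[K] l₂)))) :
    (∀ u v w : A' ⊗[K] L,
      bl' (LinearMap.lTensor A' α u) (bl' v w)
        = bl' (bl' u v) (LinearMap.lTensor A' α w)
          - bl' (bl' u w) (LinearMap.lTensor A' α v)) ∧
    (∀ u v : A' ⊗[K] L,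
      (TensorProduct.lid K L) ((TensorProduct.map ε'.toLinearMap LinearMap.id) (bl' u v))
        = b ((TensorProduct.lid K L) ((TensorProduct.map ε'.toLinearMap LinearMap.id) u))
            ((TensorProduct.lid K L) ((TensorProduct.map ε'.toLinearMap LinearMap.id) v))) := by
  have hA : homLeibnizator bl (α.baseChange A) = 0 := by
    rwa [homLeibnizator_eq_zero_iff, LinearMap.baseChange_eq_ltensor]
  have hA' := (homLeibnizator_eq_zero_iff _ _).1 (IsPushoutBracket.homLeibnizator_eq_zero hpush hA)
  rw [LinearMap.baseChange_eq_ltensor] at hA'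
  exact ⟨hA', IsPushoutBracket.lid_map_augmentation hpush hφ hhom⟩
end

section
/- Let L be the 3-dimensional vector space with basis {e₁,e₂,e₃}, bracket [e₁,e₃] = e₂, [e₃,e₃] = e₁ (all other brackets of basis elements zero), and α the linear map α(e₁) = c²e₁ + ac e₂, α(e₂) = c³e₂, α(e₃) = a e₁ + b e₂ + c e₃ for scalars a,b,c. Then (L, [·,·], α) is a multiplicative Hom-Leibniz algebra: α[x,y] = [α(x),α(y)] and the Hom-Leibniz identity [α(x),[y,z]] = [[x,y],α(z)] − [[x,z],α(y)] hold for all x,y,z. -/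
/-!
Both sides of the Hom-Leibniz identity vanish. The bracket only sees the `e₃`-coordinate of its
right argument and takes values in `span {e₁, e₂}`, so `[α x, [y, z]] = 0`; and
`[[x, y], w] = x₃ y₃ w₃ e₂` while `α` scales the `e₃`-coordinate by `c`, so
`[[x, y], α z] = [[x, z], α y]`. Multiplicativity is a direct coordinate computation.
-/

/-- Basis vectors of the 3-dimensional example. -/
noncomputable def e3v (i : Fin 3) : Fin 3 → ℝ := Pi.single i 1

/-- The bracket with `[e₁,e₃] = e₂`, `[e₃,e₃] = e₁`, all other brackets of basis
elements zero, extended bilinearly. -/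
noncomputable def br3 (x y : Fin 3 → ℝ) : Fin 3 → ℝ :=
  (x 0 * y 2) • e3v 1 + (x 2 * y 2) • e3v 0

/-- The map `α` with `α(e₁) = c²e₁ + ac e₂`, `α(e₂) = c³e₂`,
`α(e₃) = a e₁ + b e₂ + c e₃`. -/
noncomputable def alpha8 (a b c : ℝ) (x : Fin 3 → ℝ) : Fin 3 → ℝ :=
  ![c ^ 2 * x 0 + a * x 2, a * c * x 0 + c ^ 3 * x 1 + b * x 2, c * x 2]

lemma br3_eq_vecCons (x y : Fin 3 → ℝ) : br3 x y = ![x 2 * y 2, x 0 * y 2, 0] := by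
  ext i
  fin_cases i <;> simp [br3, e3v]

lemma br3_apply_two (x y : Fin 3 → ℝ) : br3 x y 2 = 0 := by
  simp [br3_eq_vecCons]

lemma br3_eq_zero_of_apply_two_eq_zero (x : Fin 3 → ℝ) {y : Fin 3 → ℝ} (hy : y 2 = 0) :
    br3 x y = 0 := by
  simp [br3, hy]

lemma br3_br3 (x y z : Fin 3 → ℝ) : br3 (br3 x y) z = (x 2 * y 2 * z 2) • e3v 1 := by
  rw [br3, br3_eq_vecCons]
  simp

lemma alpha8_apply_two (a b c : ℝ) (x : Fin 3 → ℝ) : alpha8 a b c x 2 = c * x 2 := rfl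

theorem alpha8_br3 (a b c : ℝ) (x y : Fin 3 → ℝ) :
    alpha8 a b c (br3 x y) = br3 (alpha8 a b c x) (alpha8 a b c y) := by
  rw [br3_eq_vecCons, br3_eq_vecCons]
  ext i
  fin_cases i <;> simp [alpha8] <;> ring

theorem br3_alpha8_homLeibniz (a b c : ℝ) (x y z : Fin 3 → ℝ) :
    br3 (alpha8 a b c x) (br3 y z)
      = br3 (br3 x y) (alpha8 a b c z) - br3 (br3 x z) (alpha8 a b c y) := by
  have h_symm : x 2 * y 2 * (c * z 2) = x 2 * z 2 * (c * y 2) := by ring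
  rw [br3_eq_zero_of_apply_two_eq_zero _ (br3_apply_two y z), br3_br3, br3_br3,
    alpha8_apply_two, alpha8_apply_two, h_symm, sub_self]

/-- `(L, [·,·], α)` with the above data is a multiplicative Hom-Leibniz algebra. -/
theorem example_multiplicative_homLeibniz (a b c : ℝ) :
    (∀ x y : Fin 3 → ℝ, alpha8 a b c (br3 x y) = br3 (alpha8 a b c x) (alpha8 a b c y)) ∧
    (∀ x y z : Fin 3 → ℝ,
      br3 (alpha8 a b c x) (br3 y z)
        = br3 (br3 x y) (alpha8 a b c z) - br3 (br3 x z) (alpha8 a b c y)) :=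
  ⟨alpha8_br3 a b c, br3_alpha8_homLeibniz a b c⟩
end
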